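/- Let X_1, X_2, … be a sequence of random variables taking values in [0, l], with F_k = σ(X_1, …, X_{k−1}) and Y_k = E[X_k | F_k]. Then for any δ > 0, P[∃ n ≥ 1 : ∑_{k=1}^n X_k ≥ 3 ∑_{k=1}^n Y_k + l ln(1/δ)] ≤ δ. -/

import Mathlib

/-!
With `Y k = E[X k | σ(X 1, …, X (k-1))]`, the process
`M n = exp ((∑_{k ≤ n} (X k - 2 Y k)) / l)` is a nonnegative supermartingale for the natural
filtration: convexity gives `exp (x / l) ≤ 1 + 2 x / l` on `[0, l]` (as `e - 1 ≤ 2`), hence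
`E[exp (X (n+1) / l) | 𝓕 n] ≤ 1 + 2 Y (n+1) / l ≤ exp (2 Y (n+1) / l)`. Since `M 0 = 1`, Ville's
inequality bounds the probability that `M` ever reaches `1 / δ` by `δ`, and as `Y k ≥ 0`, the event
`∑ X ≥ 3 ∑ Y + l log (1 / δ)` forces `M n ≥ 1 / δ`.
-/

open MeasureTheory ProbabilityTheory
open scoped ENNReal NNReal

/-- The σ-algebra `σ(X 1, …, X (k-1))` generated by the past of the process. -/
def pastSigma {Ω : Type*} (X : ℕ → Ω → ℝ) (k : ℕ) : MeasurableSpace Ω :=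
  ⨆ i ∈ Finset.Icc 1 (k - 1), MeasurableSpace.comap (X i) inferInstance

namespace MeasureTheory.Supermartingale

variable {Ω : Type*} {mΩ : MeasurableSpace Ω} {μ : Measure Ω} [IsFiniteMeasure μ]
  {𝒢 : Filtration ℕ mΩ} {f : ℕ → Ω → ℝ} {ε : ℝ}

theorem ville_ineq_finite_horizon (hf : Supermartingale f 𝒢 μ) (hnonneg : 0 ≤ f) (hε : 0 < ε)
    (n : ℕ) :
    ENNReal.ofReal ε * μ {ω | ∃ k ≤ n, ε ≤ f k ω} ≤ ENNReal.ofReal (∫ ω, f 0 ω ∂μ) := by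
  set A := {ω | ∃ k ≤ n, ε ≤ f k ω}
  set τ : Ω → ℕ∞ := fun ω ↦ (hittingBtwn f (Set.Ici ε) 0 n ω : ℕ)
  have hτ : IsStoppingTime 𝒢 τ :=
    hf.stronglyAdapted.adapted.isStoppingTime_hittingBtwn measurableSet_Ici
  have hτn : ∀ ω, τ ω ≤ n := fun ω ↦ WithTop.coe_le_coe.mpr (hittingBtwn_le ω)
  have hneg : stoppedValue (-f) τ = -stoppedValue f τ := rfl
  have hint : Integrable (stoppedValue f τ) μ := by
    simpa [hneg] using (hf.neg.integrable_stoppedValue hτ hτn).neg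
  have hA : MeasurableSet A := by
    have : A = ⋃ k, ⋃ _ : k ≤ n, {ω | ε ≤ f k ω} := by ext; simp [A]
    rw [this]
    exact .iUnion fun k ↦ .iUnion fun _ ↦
      measurableSet_le measurable_const ((hf.stronglyAdapted k).measurable.le (𝒢.le k))
  have hstop_ge : ∀ ω ∈ A, ε ≤ stoppedValue f τ ω := fun ω ⟨k, hk, hεk⟩ ↦
    stoppedValue_hittingBtwn_mem ⟨k, ⟨Nat.zero_le _, hk⟩, hεk⟩
  have hoptional : ∫ ω, stoppedValue f τ ω ∂μ ≤ ∫ ω, f 0 ω ∂μ := by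
    have := hf.neg.expected_stoppedValue_mono (isStoppingTime_const 𝒢 0) hτ (fun _ ↦ zero_le) hτn
    simp only [hneg, stoppedValue_const, Pi.neg_apply, integral_neg, neg_le_neg_iff] at this
    exact this
  calc ENNReal.ofReal ε * μ A = ENNReal.ofReal (ε * μ.real A) := by
        rw [ENNReal.ofReal_mul hε.le, ofReal_measureReal]
    _ ≤ ENNReal.ofReal (∫ ω in A, stoppedValue f τ ω ∂μ) := ENNReal.ofReal_le_ofReal <|
        setIntegral_ge_of_const_le_real hA (measure_ne_top _ _) hstop_ge hint.integrableOn
    _ ≤ ENNReal.ofReal (∫ ω, f 0 ω ∂μ) := ENNReal.ofReal_le_ofReal <|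
        (setIntegral_le_integral hint (.of_forall fun ω ↦ hnonneg _ _)).trans hoptional

theorem ville_ineq (hf : Supermartingale f 𝒢 μ) (hnonneg : 0 ≤ f) (hε : 0 < ε) :
    ENNReal.ofReal ε * μ {ω | ∃ k, ε ≤ f k ω} ≤ ENNReal.ofReal (∫ ω, f 0 ω ∂μ) := by
  have hmono : Monotone fun n ↦ {ω | ∃ k ≤ n, ε ≤ f k ω} :=
    fun _ _ hab _ ⟨k, hk, h⟩ ↦ ⟨k, hk.trans hab, h⟩
  have hunion : {ω | ∃ k, ε ≤ f k ω} = ⋃ n, {ω | ∃ k ≤ n, ε ≤ f k ω} := by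
    ext ω; simpa using ⟨fun ⟨k, h⟩ ↦ ⟨k, k, le_rfl, h⟩, fun ⟨_, k, _, h⟩ ↦ ⟨k, h⟩⟩
  rw [hunion, hmono.measure_iUnion, ENNReal.mul_iSup]
  exact iSup_le (hf.ville_ineq_finite_horizon hnonneg hε)

end MeasureTheory.Supermartingale

theorem Real.exp_le_one_add_two_mul {t : ℝ} (h₀ : 0 ≤ t) (h₁ : t ≤ 1) :
    Real.exp t ≤ 1 + 2 * t := by
  have hconv := convexOn_exp.2 (Set.mem_univ 0) (Set.mem_univ 1) (sub_nonneg.2 h₁) h₀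
    (sub_add_cancel 1 t)
  simp only [smul_eq_mul, mul_zero, mul_one, zero_add, Real.exp_zero] at hconv
  nlinarith [Real.exp_one_lt_three]

section ExpCompensatedSum

variable {Ω : Type*} {mΩ : MeasurableSpace Ω} {μ : Measure Ω} {l : ℝ}

theorem integrable_exp_div_of_mem_Icc [IsFiniteMeasure μ] {Z : Ω → ℝ} (hZ : AEMeasurable Z μ)
    (hl : 0 < l) (hbdd : ∀ᵐ ω ∂μ, Z ω ∈ Set.Icc 0 l) :
    Integrable (fun ω ↦ Real.exp (Z ω / l)) μ := by
  refine .of_mem_Icc 0 (Real.exp 1) (Real.measurable_exp.comp_aemeasurable (hZ.div_const l)) ?_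
  filter_upwards [hbdd] with ω hω
  exact ⟨(Real.exp_pos _).le, Real.exp_le_exp.2 ((div_le_one hl).2 hω.2)⟩

theorem condExp_exp_div_le [IsFiniteMeasure μ] {m : MeasurableSpace Ω} (hm : m ≤ mΩ)
    {Z : Ω → ℝ} (hZ : AEMeasurable Z μ) (hl : 0 < l) (hbdd : ∀ᵐ ω ∂μ, Z ω ∈ Set.Icc 0 l) :
    μ[fun ω ↦ Real.exp (Z ω / l) | m] ≤ᵐ[μ] fun ω ↦ Real.exp (2 * μ[Z | m] ω / l) := by
  have hZint : Integrable Z μ := .of_mem_Icc 0 l hZ hbdd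
  have hchord : (fun ω ↦ Real.exp (Z ω / l)) ≤ᵐ[μ] (fun _ ↦ (1 : ℝ)) + (2 / l) • Z := by
    filter_upwards [hbdd] with ω hω
    have := Real.exp_le_one_add_two_mul (div_nonneg hω.1 hl.le) ((div_le_one hl).2 hω.2)
    simp only [Pi.add_apply, Pi.smul_apply, smul_eq_mul]
    linarith [show 2 * (Z ω / l) = 2 / l * Z ω by ring]
  filter_upwards [condExp_mono (integrable_exp_div_of_mem_Icc hZ hl hbdd)
      ((integrable_const 1).add (hZint.smul (2 / l))) hchord,
    condExp_add (integrable_const 1) (hZint.smul (2 / l)) m, condExp_smul (2 / l) Z m]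
    with ω hmono hadd hsmul
  rw [hadd, Pi.add_apply, hsmul, condExp_const hm] at hmono
  simp only [Pi.smul_apply, smul_eq_mul] at hmono
  linarith [Real.add_one_le_exp (2 * μ[Z | m] ω / l),
    show 2 / l * μ[Z | m] ω = 2 * μ[Z | m] ω / l by ring]

variable {𝒢 : Filtration ℕ mΩ} {X : ℕ → Ω → ℝ}

noncomputable def expCompensatedSum (μ : Measure Ω) (𝒢 : Filtration ℕ mΩ) (X : ℕ → Ω → ℝ)
    (l : ℝ) (n : ℕ) (ω : Ω) : ℝ :=
  Real.exp ((∑ k ∈ Finset.Icc 1 n, (X k ω - 2 * μ[X k | 𝒢 (k - 1)] ω)) / l)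

theorem expCompensatedSum_pos (n : ℕ) (ω : Ω) : 0 < expCompensatedSum μ 𝒢 X l n ω :=
  Real.exp_pos _

@[simp]
theorem expCompensatedSum_zero : expCompensatedSum μ 𝒢 X l 0 = 1 := by
  ext ω
  simp [expCompensatedSum]

theorem expCompensatedSum_succ (n : ℕ) (ω : Ω) :
    expCompensatedSum μ 𝒢 X l (n + 1) ω = expCompensatedSum μ 𝒢 X l n ω *
      Real.exp (-(2 * μ[X (n + 1) | 𝒢 n] ω) / l) * Real.exp (X (n + 1) ω / l) := by
  simp only [expCompensatedSum, ← Real.exp_add, Finset.sum_Icc_succ_top (Nat.le_add_left 1 n),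
    Nat.add_sub_cancel]
  ring_nf

variable (hadp : ∀ n, StronglyMeasurable[𝒢 (n + 1)] (X (n + 1))) (hl : 0 < l)
  (hbdd : ∀ k, ∀ᵐ ω ∂μ, X k ω ∈ Set.Icc 0 l)
include hadp

theorem stronglyAdapted_expCompensatedSum : StronglyAdapted 𝒢 (expCompensatedSum μ 𝒢 X l) := by
  intro n
  refine (Real.measurable_exp.comp
    ((Finset.measurable_sum _ fun k hk ↦ ?_).div_const l)).stronglyMeasurable
  obtain ⟨j, rfl⟩ : ∃ j, k = j + 1 := ⟨k - 1, by grind⟩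
  have hjn : j + 1 ≤ n := (Finset.mem_Icc.1 hk).2
  rw [Nat.add_sub_cancel]
  exact ((hadp j).measurable.mono (𝒢.mono hjn) le_rfl).sub
    ((stronglyMeasurable_condExp.measurable.mono (𝒢.mono (by omega)) le_rfl).const_mul 2)

include hl hbdd

theorem integrable_expCompensatedSum [IsFiniteMeasure μ] (n : ℕ) :
    Integrable (expCompensatedSum μ 𝒢 X l n) μ := by
  refine .of_bound ((stronglyAdapted_expCompensatedSum hadp n).mono (𝒢.le n)).aestronglyMeasurable
    (Real.exp n) ?_
  have hcondExp_nonneg (k : ℕ) : 0 ≤ᵐ[μ] μ[X k | 𝒢 (k - 1)] :=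
    condExp_nonneg (by filter_upwards [hbdd k] with ω h using h.1)
  filter_upwards [ae_all_iff.2 hbdd, ae_all_iff.2 hcondExp_nonneg] with ω hX hY
  rw [Real.norm_of_nonneg (expCompensatedSum_pos n ω).le, expCompensatedSum, Real.exp_le_exp,
    div_le_iff₀ hl]
  calc ∑ k ∈ Finset.Icc 1 n, (X k ω - 2 * μ[X k | 𝒢 (k - 1)] ω)
      ≤ ∑ k ∈ Finset.Icc 1 n, l := Finset.sum_le_sum fun k _ ↦ by
        linarith [(hX k).2, show (0 : ℝ) ≤ _ from hY k]
    _ = n * l := by simp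

theorem condExp_expCompensatedSum_succ_le [IsFiniteMeasure μ] (n : ℕ) :
    μ[expCompensatedSum μ 𝒢 X l (n + 1) | 𝒢 n] ≤ᵐ[μ] expCompensatedSum μ 𝒢 X l n := by
  set Y := μ[X (n + 1) | 𝒢 n]
  set A : Ω → ℝ := fun ω ↦ expCompensatedSum μ 𝒢 X l n ω * Real.exp (-(2 * Y ω) / l)
  have hX : AEMeasurable (X (n + 1)) μ := ((hadp n).mono (𝒢.le _)).measurable.aemeasurable
  have hsucc : expCompensatedSum μ 𝒢 X l (n + 1) = A * fun ω ↦ Real.exp (X (n + 1) ω / l) :=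
    funext (expCompensatedSum_succ n)
  have hA : StronglyMeasurable[𝒢 n] A :=
    ((stronglyAdapted_expCompensatedSum hadp n).measurable.mul (Real.measurable_exp.comp
      ((stronglyMeasurable_condExp.measurable.const_mul 2).neg.div_const l))).stronglyMeasurable
  have hpull := condExp_mul_of_stronglyMeasurable_left hA
    (hsucc ▸ integrable_expCompensatedSum hadp hl hbdd (n + 1))
    (integrable_exp_div_of_mem_Icc hX hl (hbdd (n + 1)))
  rw [hsucc]
  filter_upwards [hpull, condExp_exp_div_le (𝒢.le n) hX hl (hbdd (n + 1))] with ω hpull hexp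
  have hA_nonneg : 0 ≤ A ω := mul_nonneg (expCompensatedSum_pos n ω).le (Real.exp_pos _).le
  calc μ[A * fun ω ↦ Real.exp (X (n + 1) ω / l) | 𝒢 n] ω
      = A ω * μ[fun ω ↦ Real.exp (X (n + 1) ω / l) | 𝒢 n] ω := hpull
    _ ≤ A ω * Real.exp (2 * Y ω / l) := mul_le_mul_of_nonneg_left hexp hA_nonneg
    _ = expCompensatedSum μ 𝒢 X l n ω := by
      rw [mul_assoc, ← Real.exp_add, neg_div, neg_add_cancel, Real.exp_zero, mul_one]

theorem supermartingale_expCompensatedSum [IsFiniteMeasure μ] :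
    Supermartingale (expCompensatedSum μ 𝒢 X l) 𝒢 μ :=
  supermartingale_nat (stronglyAdapted_expCompensatedSum hadp)
    (integrable_expCompensatedSum hadp hl hbdd) (condExp_expCompensatedSum_succ_le hadp hl hbdd)

end ExpCompensatedSum

section PastFiltration

variable {Ω : Type*} {mΩ : MeasurableSpace Ω} {X : ℕ → Ω → ℝ}

def pastFiltration (X : ℕ → Ω → ℝ) (hX : ∀ k, Measurable (X k)) : Filtration ℕ mΩ where
  seq n := pastSigma X (n + 1)
  mono' _ _ hij := iSup₂_le fun k hk ↦ le_iSup₂_of_le k (by simp_all; omega) le_rfl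
  le' _ := iSup₂_le fun k _ ↦ (hX k).comap_le

theorem pastFiltration_sub_one (hX : ∀ k, Measurable (X k)) {k : ℕ} (hk : 1 ≤ k) :
    pastFiltration X hX (k - 1) = pastSigma X k := by
  change pastSigma X (k - 1 + 1) = _
  rw [Nat.sub_add_cancel hk]

theorem stronglyMeasurable_pastFiltration (hX : ∀ k, Measurable (X k)) (n : ℕ) :
    StronglyMeasurable[pastFiltration X hX (n + 1)] (X (n + 1)) :=
  (Measurable.of_comap_le (le_iSup₂_of_le (n + 1) (by simp) le_rfl)).stronglyMeasurable

end PastFiltration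

/-- Anytime multiplicative concentration: for `X k ∈ [0, l]` and
`Y k = E[X k | σ(X 1, …, X (k-1))]`, for any `δ > 0`,
`P[∃ n ≥ 1, ∑_{k=1}^n X k ≥ 3 ∑_{k=1}^n Y k + l ln(1/δ)] ≤ δ`. -/
theorem anytime_multiplicative_upper
    {Ω : Type*} {mΩ : MeasurableSpace Ω} {μ : Measure Ω} [IsProbabilityMeasure μ]
    (X : ℕ → Ω → ℝ) (l δ : ℝ) (hl : 0 < l) (hδ : δ ∈ Set.Ioo (0 : ℝ) 1)
    (hmeas : ∀ k, Measurable (X k))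
    (hbdd : ∀ k, ∀ᵐ ω ∂μ, X k ω ∈ Set.Icc 0 l) :
    μ {ω | ∃ n, 1 ≤ n ∧
        3 * ∑ k ∈ Finset.Icc 1 n, (μ[X k | pastSigma X k]) ω + l * Real.log (1 / δ) ≤
          ∑ k ∈ Finset.Icc 1 n, X k ω} ≤ ENNReal.ofReal δ := by
  set 𝒢 := pastFiltration X hmeas
  set M := expCompensatedSum μ 𝒢 X l
  have hM : Supermartingale M 𝒢 μ :=
    supermartingale_expCompensatedSum (stronglyMeasurable_pastFiltration hmeas) hl hbdd
  have hprob : μ {ω | ∃ n, 1 / δ ≤ M n ω} ≤ ENNReal.ofReal δ := by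
    have := hM.ville_ineq (fun n ω ↦ (expCompensatedSum_pos n ω).le) (one_div_pos.2 hδ.1)
    simpa [M, ENNReal.ofReal_inv_of_pos hδ.1, ENNReal.inv_mul_le_iff, hδ.1] using this
  refine (measure_mono_ae ?_).trans hprob
  have hcondExp_nonneg (k : ℕ) : 0 ≤ᵐ[μ] μ[X k | pastSigma X k] :=
    condExp_nonneg (by filter_upwards [hbdd k] with ω h using h.1)
  filter_upwards [ae_all_iff.2 hcondExp_nonneg] with ω hY hω
  obtain ⟨n, -, hn⟩ := hω
  refine ⟨n, ?_⟩
  have hsum : ∑ k ∈ Finset.Icc 1 n, (X k ω - 2 * μ[X k | 𝒢 (k - 1)] ω) =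
      ∑ k ∈ Finset.Icc 1 n, X k ω - 2 * ∑ k ∈ Finset.Icc 1 n, μ[X k | pastSigma X k] ω := by
    rw [Finset.mul_sum, ← Finset.sum_sub_distrib]
    refine Finset.sum_congr rfl fun k hk ↦ ?_
    rw [pastFiltration_sub_one hmeas (Finset.mem_Icc.1 hk).1]
  have hT : 0 ≤ ∑ k ∈ Finset.Icc 1 n, μ[X k | pastSigma X k] ω :=
    Finset.sum_nonneg fun k _ ↦ hY k
  rw [← Real.exp_log (one_div_pos.2 hδ.1)]
  refine Real.exp_le_exp.2 ((le_div_iff₀ hl).2 ?_)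
  linarith
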